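/- arXiv:0909.1975 — 6 statements merged into one kernel-verified Lean document; each statement's English description precedes it below -/
import Mathlib

section
/- The quadratic form J(p,p) = (1/(n-1))(∑_{i=1}^r p_i)^2 − ∑_{i=1}^r p_i^2/d_i on ℝ^r, where d_1,…,d_r are positive integers with n = d_1+⋯+d_r ≥ 2 and r ≥ 2, has Lorentz signature (1, r−1), i.e., it is positive on some one-dimensional subspace and negative definite on an (r−1)-dimensional complementary subspace. -/
/-!
The weight vector `d` spans a positive line: `J(d, d) = n² / (n - 1) - n = n / (n - 1) > 0`.
On the hyperplane `∑ pᵢ = 0`, which is complementary to it since `∑ dᵢ = n ≠ 0`, the first term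
of `J` vanishes and `J(p, p) = -∑ pᵢ² / dᵢ` is negative definite.
-/

open Finset Submodule

section

variable {ι : Type*} [Fintype ι]

noncomputable def lorentzForm (w p : ι → ℝ) : ℝ :=
  1 / (∑ i, w i - 1) * (∑ i, p i) ^ 2 - ∑ i, p i ^ 2 / w i

lemma sum_sq_smul_self_div (w : ι → ℝ) (c : ℝ) :
    ∑ i, (c • w) i ^ 2 / w i = c ^ 2 * ∑ i, w i := by
  rw [mul_sum]
  refine sum_congr rfl fun i _ => ?_
  rw [Pi.smul_apply, smul_eq_mul, mul_pow, mul_div_assoc, sq (w i), mul_self_div_self]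

lemma lorentzForm_smul_self (w : ι → ℝ) (c : ℝ) (hS : ∑ i, w i ≠ 1) :
    lorentzForm w (c • w) = c ^ 2 * (∑ i, w i) / (∑ i, w i - 1) := by
  have hS' : ∑ i, w i - 1 ≠ 0 := sub_ne_zero.mpr hS
  rw [lorentzForm, sum_sq_smul_self_div]
  simp only [Pi.smul_apply, smul_eq_mul, ← mul_sum]
  field_simp
  ring

lemma lorentzForm_smul_self_pos {w : ι → ℝ} (hS : 1 < ∑ i, w i) {c : ℝ} (hc : c ≠ 0) :
    0 < lorentzForm w (c • w) := by
  rw [lorentzForm_smul_self w c hS.ne']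
  have : 0 < ∑ i, w i - 1 := sub_pos.mpr hS
  positivity

lemma sum_sq_div_pos {w p : ι → ℝ} (hw : ∀ i, 0 < w i) (hp : p ≠ 0) :
    0 < ∑ i, p i ^ 2 / w i := by
  obtain ⟨j, hj⟩ := Function.ne_iff.mp hp
  exact sum_pos' (fun i _ => div_nonneg (sq_nonneg _) (hw i).le)
    ⟨j, mem_univ j, div_pos (sq_pos_of_ne_zero hj) (hw j)⟩

lemma lorentzForm_neg_of_sum_eq_zero {w p : ι → ℝ} (hw : ∀ i, 0 < w i)
    (hsum : ∑ i, p i = 0) (hp : p ≠ 0) : lorentzForm w p < 0 := by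
  rw [lorentzForm, hsum, zero_pow two_ne_zero, mul_zero, zero_sub, neg_neg_iff_pos]
  exact sum_sq_div_pos hw hp

end

lemma isCompl_span_singleton_ker {K V : Type*} [Field K] [AddCommGroup V] [Module K V]
    {f : Module.Dual K V} {v : V} (hv : f v ≠ 0) : IsCompl (K ∙ v) (LinearMap.ker f) :=
  (isCompl_span_singleton_of_isCoatom_of_notMem
    (LinearMap.isCoatom_ker_of_surjective (f.surjective_of_ne_zero fun h => hv (by simp [h])))
    hv).symm

theorem lorentz_signature_J_general (r : ℕ) (d : Fin r → ℕ)
    (hd : ∀ i, 0 < d i) (hn : 2 ≤ ∑ i, d i) :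
    ∃ L M : Submodule ℝ (Fin r → ℝ),
      IsCompl L M ∧ Module.finrank ℝ L = 1 ∧ Module.finrank ℝ M = r - 1 ∧
      (∀ p ∈ L, p ≠ 0 →
        0 < (1 / ((∑ i, (d i : ℝ)) - 1)) * (∑ i, p i) ^ 2
              - ∑ i, (p i) ^ 2 / (d i : ℝ)) ∧
      (∀ p ∈ M, p ≠ 0 →
        (1 / ((∑ i, (d i : ℝ)) - 1)) * (∑ i, p i) ^ 2
              - ∑ i, (p i) ^ 2 / (d i : ℝ) < 0) := by
  set w : Fin r → ℝ := fun i => d i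
  have hw : ∀ i, 0 < w i := fun i => Nat.cast_pos.mpr (hd i)
  have hS : 1 < ∑ i, w i := by
    have : (2 : ℝ) ≤ ∑ i, w i := by simp only [w]; exact_mod_cast hn
    linarith
  set σ : Module.Dual ℝ (Fin r → ℝ) := ∑ i, LinearMap.proj i
  have hσ (p : Fin r → ℝ) : σ p = ∑ i, p i := by simp [σ, LinearMap.sum_apply]
  have hσw : σ w ≠ 0 := by rw [hσ]; positivity
  have hσ0 : σ ≠ 0 := fun h => hσw (by simp [h])
  refine ⟨ℝ ∙ w, LinearMap.ker σ, isCompl_span_singleton_ker hσw,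
    finrank_span_singleton fun h => hσw (by simp [h]), ?_, ?_, ?_⟩
  · have := Module.Dual.finrank_ker_add_one_of_ne_zero hσ0
    rw [Module.finrank_fin_fun] at this
    omega
  · rintro p hp hp0
    obtain ⟨c, rfl⟩ := mem_span_singleton.mp hp
    exact lorentzForm_smul_self_pos hS fun hc => hp0 (by simp [hc])
  · intro p hp hp0
    exact lorentzForm_neg_of_sum_eq_zero hw ((hσ p).symm.trans hp) hp0

/-- The quadratic form J(p,p) = (1/(n-1))(∑ p_i)² − ∑ p_i²/d_i on ℝ^r has
Lorentz signature (1, r−1). -/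
theorem lorentz_signature_J (r : ℕ) (hr : 2 ≤ r) (d : Fin r → ℕ)
    (hd : ∀ i, 0 < d i) (hn : 2 ≤ ∑ i, d i) :
    ∃ L M : Submodule ℝ (Fin r → ℝ),
      IsCompl L M ∧ Module.finrank ℝ L = 1 ∧ Module.finrank ℝ M = r - 1 ∧
      (∀ p ∈ L, p ≠ 0 →
        0 < (1 / ((∑ i, (d i : ℝ)) - 1)) * (∑ i, p i) ^ 2
              - ∑ i, (p i) ^ 2 / (d i : ℝ)) ∧
      (∀ p ∈ M, p ≠ 0 →
        (1 / ((∑ i, (d i : ℝ)) - 1)) * (∑ i, p i) ^ 2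
              - ∑ i, (p i) ^ 2 / (d i : ℝ) < 0) :=
  lorentz_signature_J_general r d hd hn
end

section
/- The only positive integer solutions (d_2, d_3) of d_2^2(d_3 − 9) + d_3^2(d_2 − 9) + d_2 d_3(d_2 − 13) + d_2 d_3(d_3 − 13) = 0 are (11, 11), (7, 21), and (21, 7). -/
lemma sol_P2_aux (a b : ℤ) (ha : 0 < a) (hab : a ≤ b)
    (heq : 2 * a * b * (a + b) = 9 * a ^ 2 + 9 * b ^ 2 + 26 * a * b) :
    (a = 11 ∧ b = 11) ∨ (a = 7 ∧ b = 21) := by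
  have hb : 0 < b := lt_of_lt_of_le ha hab
  have h5 : 5 ≤ a := by nlinarith [sq_nonneg (b - 3), mul_pos ha hb]
  have h13 : a ≤ 13 := by
    nlinarith [mul_pos ha hb, mul_le_mul hab hab ha.le hb.le,
      mul_pos (mul_pos ha hb) hb]
  have hbu : b ≤ 83 := by nlinarith [mul_pos hb hb, mul_pos ha hb]
  interval_cases a <;> interval_cases b <;> omega

theorem sol_P2 (d2 d3 : ℤ) (h2 : 0 < d2) (h3 : 0 < d3) :
    d2 ^ 2 * (d3 - 9) + d3 ^ 2 * (d2 - 9) + d2 * d3 * (d2 - 13)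
        + d2 * d3 * (d3 - 13) = 0
      ↔ (d2 = 11 ∧ d3 = 11) ∨ (d2 = 7 ∧ d3 = 21) ∨ (d2 = 21 ∧ d3 = 7) := by
  constructor
  · intro h
    rcases le_total d2 d3 with hle | hle
    · rcases sol_P2_aux d2 d3 h2 hle (by ring_nf; ring_nf at h; linarith) with ⟨e1, e2⟩ | ⟨e1, e2⟩
      · exact Or.inl ⟨e1, e2⟩
      · exact Or.inr (Or.inl ⟨e1, e2⟩)
    · rcases sol_P2_aux d3 d2 h3 hle (by ring_nf; ring_nf at h; linarith) with ⟨e1, e2⟩ | ⟨e1, e2⟩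
      · exact Or.inl ⟨e2, e1⟩
      · exact Or.inr (Or.inr ⟨e2, e1⟩)
  · rintro (⟨rfl, rfl⟩ | ⟨rfl, rfl⟩ | ⟨rfl, rfl⟩) <;> norm_num
end

section
/- There are no positive integers d_1, d_3 satisfying both 2 d_2 (4 d_1 − d_3) = −16 d_1^2 + 2 d_1^2 d_3 − 6 d_1 d_3 + d_1 d_3^2 + d_3^2 for some positive integer d_2 and d_3^3(d_1^2 − 1) + d_1^2 d_3^2 (d_1 − 8) + 3 d_1^3 d_3 (d_3 − 16) + P = 0 with P > 0, except (d_1, d_3) = (3, 6), which forces d_2 = 0. Formally: the unique solution in positive integers (d_1, d_3) of d_3^3(d_1^2 − 1) + d_1^2 d_3^2(d_1 − 8) + 3 d_1^3 d_3(d_3 − 16) = −P for the specific positive remainder polynomial of the parallelogram (Q1), subcase I, is (d_1, d_3) = (3, 6), and then 2 d_2 (4·3 − 6) = −16·9 + 2·9·6 − 6·3·6 + 3·36 + 36 gives d_2 = 0. -/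
/-!
Clearing denominators, the sum condition is affine in `d₂` and so is the null condition;
eliminating `d₂` leaves the equation `eliminant d₁ d₃ = 0` in the two other unknowns.
The eliminant is positive for `d₃ ≥ 8`, and as a cubic in `d₁` with constant term `-d₃³` it
forces `d₁ ∣ d₃³`. A finite check then leaves only `(d₁, d₃) = (3, 6)`, where the sum condition
reads `12 d₂ = 0`.
-/

namespace ParallelogramQ1

section Field

variable {K : Type*} [Field K] [CharZero K]

def c₁ (x z : K) : K := x * (8 / z - 1)

def c₂ (x y z : K) : K := y * (4 / z - 1 / x)

def c₃ (x z : K) : K := z * ((1 / 2) * (-1 - 1 / x + 4 / z))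

variable {x y z : K}

theorem linear_relation_of_sum_eq (hx : x ≠ 0) (hz : z ≠ 0)
    (h : c₁ x z + c₂ x y z + c₃ x z = -1) :
    2 * y * (4 * x - z) = 2 * x ^ 2 * z - 16 * x ^ 2 + x * z ^ 2 + z ^ 2 - 6 * x * z := by
  unfold c₁ c₂ c₃ at h
  field_simp at h
  linear_combination h

theorem quadratic_relation_of_null (hx : x ≠ 0) (hz : z ≠ 0)
    (h : 1 = c₁ x z ^ 2 / x + c₂ x y z ^ 2 / y + c₃ x z ^ 2 / z) :
    4 * x ^ 2 * z ^ 2 =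
      4 * x ^ 3 * (8 - z) ^ 2 + 4 * y * (4 * x - z) ^ 2 + z * (4 * x - z - x * z) ^ 2 := by
  have sq_div_self (a b : K) : (a * b) ^ 2 / a = a * b ^ 2 := by
    rcases eq_or_ne a 0 with rfl | ha
    · simp
    · field_simp
  unfold c₁ c₂ c₃ at h
  rw [sq_div_self, sq_div_self, sq_div_self] at h
  field_simp at h
  linear_combination h

end Field

section Eliminant

variable {R : Type*} [CommRing R]

-- `m²n³ + 4m³n² + 12mn² + 128m³ - n³ - 8m²n² - 48m³n`, grouped so that its sign for `n ≥ 8` is visible.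
def eliminant (m n : R) : R :=
  4 * m ^ 3 * (n - 4) * (n - 8) + n ^ 2 * ((m ^ 2 - 1) * (n - 8) + 12 * m - 8)

@[simp, norm_cast]
theorem cast_eliminant (m n : ℤ) : ((eliminant m n : ℤ) : R) = eliminant (m : R) n := by
  simp [eliminant]

theorem eliminant_eq_zero_of_relations {x y z : R}
    (hlin : 2 * y * (4 * x - z) = 2 * x ^ 2 * z - 16 * x ^ 2 + x * z ^ 2 + z ^ 2 - 6 * x * z)
    (hquad : 4 * x ^ 2 * z ^ 2 =
      4 * x ^ 3 * (8 - z) ^ 2 + 4 * y * (4 * x - z) ^ 2 + z * (4 * x - z - x * z) ^ 2) :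
    eliminant x z = 0 := by
  unfold eliminant
  linear_combination -hquad - 2 * (4 * x - z) * hlin

end Eliminant

theorem eliminant_pos_of_eight_le {m n : ℤ} (hm : 1 ≤ m) (hn : 8 ≤ n) : 0 < eliminant m n := by
  unfold eliminant
  have hcubic : 0 ≤ 4 * m ^ 3 * (n - 4) * (n - 8) := by
    have : 0 ≤ n - 4 := by linarith
    have : 0 ≤ n - 8 := by linarith
    positivity
  have hquad : 0 ≤ (m ^ 2 - 1) * (n - 8) := mul_nonneg (by nlinarith) (by linarith)
  have hn2 : 0 < n ^ 2 := by positivity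
  nlinarith

theorem dvd_cube_of_eliminant_eq_zero {m n : ℤ} (h : eliminant m n = 0) : m ∣ n ^ 3 :=
  ⟨4 * m ^ 2 * (n - 4) * (n - 8) + m * n ^ 2 * (n - 8) + 12 * n ^ 2, by
    unfold eliminant at h
    linear_combination -h⟩

theorem eq_three_six_of_lt_eight :
    ∀ n < 8, ∀ m ∈ Nat.divisors (n ^ 3), eliminant (m : ℤ) n = 0 → m = 3 ∧ n = 6 := by
  decide

theorem eq_three_six_of_eliminant_eq_zero {m n : ℕ} (hm : 0 < m) (hn : 0 < n)
    (h : eliminant (m : ℤ) n = 0) : m = 3 ∧ n = 6 := by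
  have hlt : n < 8 := by
    by_contra! hn8
    exact (eliminant_pos_of_eight_le (by exact_mod_cast hm) (by exact_mod_cast hn8)).ne' h
  have hdvd : m ∣ n ^ 3 := by exact_mod_cast dvd_cube_of_eliminant_eq_zero h
  exact eq_three_six_of_lt_eight n hlt m (Nat.mem_divisors.2 ⟨hdvd, by positivity⟩) h

end ParallelogramQ1

/-- Parallelogram (Q1), subcase I: with c₁/d₁ = 8/d₃ − 1, c₂/d₂ = 4/d₃ − 1/d₁,
c₃/d₃ = (1/2)(−1 − 1/d₁ + 4/d₃), no positive integers d₁, d₂, d₃ satisfy both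
c₁ + c₂ + c₃ = −1 and the null condition 1 = c₁²/d₁ + c₂²/d₂ + c₃²/d₃. -/
theorem no_sol_Q1_subcaseI :
    ¬ ∃ d1 d2 d3 : ℕ, 0 < d1 ∧ 0 < d2 ∧ 0 < d3 ∧
      (let c1 : ℝ := (d1 : ℝ) * (8 / (d3 : ℝ) - 1)
       let c2 : ℝ := (d2 : ℝ) * (4 / (d3 : ℝ) - 1 / (d1 : ℝ))
       let c3 : ℝ := (d3 : ℝ) * ((1 / 2) * (-1 - 1 / (d1 : ℝ) + 4 / (d3 : ℝ)))
       c1 + c2 + c3 = -1 ∧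
       1 = c1 ^ 2 / (d1 : ℝ) + c2 ^ 2 / (d2 : ℝ) + c3 ^ 2 / (d3 : ℝ)) := by
  rintro ⟨d1, d2, d3, h1, h2, h3, hsum, hnull⟩
  have hx : (d1 : ℝ) ≠ 0 := by positivity
  have hz : (d3 : ℝ) ≠ 0 := by positivity
  have hlin := ParallelogramQ1.linear_relation_of_sum_eq hx hz hsum
  have hquad := ParallelogramQ1.quadratic_relation_of_null hx hz hnull
  have helim : ((ParallelogramQ1.eliminant (d1 : ℤ) d3 : ℤ) : ℝ) = 0 := by
    push_cast
    exact ParallelogramQ1.eliminant_eq_zero_of_relations hlin hquad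
  obtain ⟨rfl, rfl⟩ :=
    ParallelogramQ1.eq_three_six_of_eliminant_eq_zero h1 h3 (Int.cast_eq_zero.1 helim)
  norm_num at hlin
  omega
end

section
/- Any positive integer solution (d_1, d_2, d_3) of the system 1/d_1 = 2/d_2 + 1/d_3 together with the null condition obtained from c_1/d_1 = 3/4 + 7/(4 d_2) + 3/(2 d_3), c_2/d_2 = (1/2)(1 − 1/d_2 + 2/d_3), c_3/d_3 = (1/2)(1/2 − 3/(2 d_2) − 3/d_3) and 1 = c_1^2/d_1 + c_2^2/d_2 + c_3^2/d_3 satisfies 1 ≤ d_2 ≤ 5, and for each such d_2 the resulting polynomial in d_3 has no positive integer root. -/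
set_option maxHeartbeats 1000000

lemma no_sol_P3_A_key (a x y : ℝ) (ha : 0 < a) (hx : 1 ≤ x) (hy : 1 ≤ y)
    (h1 : 1 / a = 2 / x + 1 / y)
    (h2 : 1 = (a * (3 / 4 + 7 / (4 * x) + 3 / (2 * y))) ^ 2 / a
        + (x * ((1 / 2) * (1 - 1 / x + 2 / y))) ^ 2 / x
        + (y * ((1 / 2) * (1 / 2 - 3 / (2 * x) - 3 / y))) ^ 2 / y) : False := by
  have hx0 : (0:ℝ) < x := by linarith
  have hy0 : (0:ℝ) < y := by linarith
  have hD : (0:ℝ) < 2 * y + x := by linarith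
  have haval : a = x * y / (2 * y + x) := by
    field_simp at h1
    field_simp
    nlinarith [h1]
  subst haval
  field_simp at h2
  have hM : (4096 * x^6 * y^6 * (2*y+x)) ≠ 0 := by positivity
  have hE : (2*x^2*y^4 + 18*x^3*y^3 + 4*x^4*y^2 - 12*x*y^4 - 36*x^2*y^3 + 32*x^3*y^2
      + 16*x^4*y + 18*y^4 + 138*x*y^3 + 164*x^2*y^2 + 88*x^3*y + 16*x^4) = 0 := by
    have h3 : (2*x^2*y^4 + 18*x^3*y^3 + 4*x^4*y^2 - 12*x*y^4 - 36*x^2*y^3 + 32*x^3*y^2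
        + 16*x^4*y + 18*y^4 + 138*x*y^3 + 164*x^2*y^2 + 88*x^3*y + 16*x^4)
        * (4096 * x^6 * y^6 * (2*y+x)) = 0 := by linear_combination (-256 * x^6 * y^6 * (2*y+x)) * h2
    exact (mul_eq_zero.mp h3).resolve_right hM
  nlinarith [mul_nonneg (sq_nonneg (x-3)) (by positivity : (0:ℝ) ≤ y^4),
    mul_nonneg (mul_nonneg (sq_nonneg (x-1)) hx0.le) (by positivity : (0:ℝ) ≤ y^3),
    mul_pos hx0 (by positivity : (0:ℝ) < y^3),
    mul_pos (by positivity : (0:ℝ) < x^4) (by positivity : (0:ℝ) < y^2),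
    mul_pos (by positivity : (0:ℝ) < x^3) (by positivity : (0:ℝ) < y^2),
    mul_pos (by positivity : (0:ℝ) < x^2) (by positivity : (0:ℝ) < y^2),
    mul_pos (by positivity : (0:ℝ) < x^4) hy0,
    mul_pos (by positivity : (0:ℝ) < x^3) hy0,
    (by positivity : (0:ℝ) < x^4)]

/-- Pentagon (P3), subcase A (region 3): with 1/d₁ = 2/d₂ + 1/d₃ and the
displayed values of cᵢ/dᵢ, the null condition forces 1 ≤ d₂ ≤ 5, and there
are no positive integer solutions at all. -/
theorem no_sol_P3_A :
    (∀ d1 d2 d3 : ℕ, 0 < d1 → 0 < d2 → 0 < d3 →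
      (1 / (d1 : ℝ) = 2 / (d2 : ℝ) + 1 / (d3 : ℝ)) →
      (let c1 : ℝ := (d1 : ℝ) * (3 / 4 + 7 / (4 * (d2 : ℝ)) + 3 / (2 * (d3 : ℝ)))
       let c2 : ℝ := (d2 : ℝ) * ((1 / 2) * (1 - 1 / (d2 : ℝ) + 2 / (d3 : ℝ)))
       let c3 : ℝ := (d3 : ℝ) * ((1 / 2) * (1 / 2 - 3 / (2 * (d2 : ℝ)) - 3 / (d3 : ℝ)))
       1 = c1 ^ 2 / (d1 : ℝ) + c2 ^ 2 / (d2 : ℝ) + c3 ^ 2 / (d3 : ℝ)) →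
      d2 ≤ 5) ∧
    ¬ ∃ d1 d2 d3 : ℕ, 0 < d1 ∧ 0 < d2 ∧ 0 < d3 ∧
      (1 / (d1 : ℝ) = 2 / (d2 : ℝ) + 1 / (d3 : ℝ)) ∧
      (let c1 : ℝ := (d1 : ℝ) * (3 / 4 + 7 / (4 * (d2 : ℝ)) + 3 / (2 * (d3 : ℝ)))
       let c2 : ℝ := (d2 : ℝ) * ((1 / 2) * (1 - 1 / (d2 : ℝ) + 2 / (d3 : ℝ)))
       let c3 : ℝ := (d3 : ℝ) * ((1 / 2) * (1 / 2 - 3 / (2 * (d2 : ℝ)) - 3 / (d3 : ℝ)))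
       1 = c1 ^ 2 / (d1 : ℝ) + c2 ^ 2 / (d2 : ℝ) + c3 ^ 2 / (d3 : ℝ)) := by
  constructor
  · intro d1 d2 d3 h1 h2 h3 heq hnull
    exact absurd hnull (by
      intro hn
      exact no_sol_P3_A_key (d1 : ℝ) (d2 : ℝ) (d3 : ℝ)
        (by exact_mod_cast h1) (by exact_mod_cast h2) (by exact_mod_cast h3) heq hn)
  · rintro ⟨d1, d2, d3, h1, h2, h3, heq, hnull⟩
    exact no_sol_P3_A_key (d1 : ℝ) (d2 : ℝ) (d3 : ℝ)
      (by exact_mod_cast h1) (by exact_mod_cast h2) (by exact_mod_cast h3) heq hnull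
end

section
/- If positive integers d_1, d_2, d_3 satisfy c_3/d_3 = (1/2)(1 + 1/d_1 + 1/d_2 − 3/d_3) and 1 = c_1^2/d_1 + c_2^2/d_2 + c_3^2/d_3 for some reals c_1, c_2, then d_3 ≤ 8. -/
theorem bound_P4 (d1 d2 d3 : ℕ) (h1 : 0 < d1) (h2 : 0 < d2) (h3 : 0 < d3)
    (c1 c2 c3 : ℝ)
    (hc3 : c3 / (d3 : ℝ)
        = (1 / 2) * (1 + 1 / (d1 : ℝ) + 1 / (d2 : ℝ) - 3 / (d3 : ℝ)))
    (hnull : 1 = c1 ^ 2 / (d1 : ℝ) + c2 ^ 2 / (d2 : ℝ) + c3 ^ 2 / (d3 : ℝ)) :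
    d3 ≤ 8 := by
  by_contra h
  push_neg at h
  have h9 : (9 : ℝ) ≤ (d3 : ℝ) := by exact_mod_cast h
  have hd1 : (1 : ℝ) ≤ (d1 : ℝ) := by exact_mod_cast h1
  have hd2 : (1 : ℝ) ≤ (d2 : ℝ) := by exact_mod_cast h2
  have hd3pos : (0 : ℝ) < (d3 : ℝ) := by linarith
  have hx : (1 : ℝ) / 3 < c3 / (d3 : ℝ) := by
    rw [hc3]
    have h1' : (0 : ℝ) < 1 / (d1 : ℝ) := by positivity
    have h2' : (0 : ℝ) < 1 / (d2 : ℝ) := by positivity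
    have h3' : 3 / (d3 : ℝ) ≤ 1 / 3 := by
      rw [div_le_div_iff₀ hd3pos (by norm_num)]
      linarith
    linarith
  have key : c3 ^ 2 / (d3 : ℝ) = (c3 / (d3 : ℝ)) ^ 2 * (d3 : ℝ) := by
    field_simp
  have hgt : (1 : ℝ) < c3 ^ 2 / (d3 : ℝ) := by
    rw [key]
    nlinarith
  have hn1 : (0 : ℝ) ≤ c1 ^ 2 / (d1 : ℝ) := by positivity
  have hn2 : (0 : ℝ) ≤ c2 ^ 2 / (d2 : ℝ) := by positivity
  linarith
end

section
/- The only positive integers d_1, d_2, d_3 with d_2 = d_3 and 2 ≤ d_2 ≤ 6 satisfying the null condition arising in pentagon (P5) (final subcase) are d = (27, 3, 3), with c = (1, −5/3, −1/3); that is, with c_1 = 1 and c_2, c_3 determined by J(a,p)=0=J(c,w), the system 1 = c_1^2/d_1 + c_2^2/d_2 + c_3^2/d_3 and c_1 + c_2 + c_3 = −1 has unique solution d_1 = 27, d_2 = d_3 = 3, c = (1, −5/3, −1/3). -/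
/-- Pentagon (P5), final subcase: with d₂ = d₃, 2 ≤ d₂ ≤ 6, c₁ = 1, the
orthogonality conditions J(c̄,w̄) = 0 = J(ā,p̄), the sum condition
c₁ + c₂ + c₃ = −1, and the null condition, the unique solution is
d = (27, 3, 3), c = (1, −5/3, −1/3); and these values do satisfy the system. -/
theorem unique_sol_P5 :
    (∀ d1 d2 d3 : ℕ, 0 < d1 → 0 < d2 → 0 < d3 → d2 = d3 → 2 ≤ d2 → d2 ≤ 6 →
      ∀ c2 c3 : ℝ,
        (1 + 2 * c2 / (d2 : ℝ) - c3 / (d3 : ℝ) = 0) →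
        (1 + (2 + c2) / (d2 : ℝ) - 2 * (2 + c3) / (d3 : ℝ) = 0) →
        (1 + c2 + c3 = -1) →
        (1 = 1 / (d1 : ℝ) + c2 ^ 2 / (d2 : ℝ) + c3 ^ 2 / (d3 : ℝ)) →
        d1 = 27 ∧ d2 = 3 ∧ d3 = 3 ∧ c2 = -5 / 3 ∧ c3 = -1 / 3) ∧
    ((1 + 2 * (-5 / 3 : ℝ) / 3 - (-1 / 3 : ℝ) / 3 = 0) ∧
     (1 + (2 + (-5 / 3 : ℝ)) / 3 - 2 * (2 + (-1 / 3 : ℝ)) / 3 = 0) ∧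
     (1 + (-5 / 3 : ℝ) + (-1 / 3 : ℝ) = -1) ∧
     (1 = 1 / (27 : ℝ) + (-5 / 3 : ℝ) ^ 2 / 3 + (-1 / 3 : ℝ) ^ 2 / 3)) := by
  constructor
  · intro d1 d2 d3 hd1 hd2 hd3 heq h2 h6 c2 c3 h1 hA hsum hnull
    subst heq
    have hd1pos : (0:ℝ) < (d1:ℝ) := by exact_mod_cast hd1
    have hinv : (0:ℝ) < ((d1:ℝ))⁻¹ := by positivity
    interval_cases d2 <;> push_cast at h1 hsum hnull <;>
      [skip; skip; skip; skip; skip]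
    · exfalso
      have hc2 : c2 = -4/3 := by linarith
      have hc3 : c3 = -2/3 := by linarith
      subst hc2 hc3; norm_num at hnull; linarith
    · have hc2 : c2 = -5/3 := by linarith
      have hc3 : c3 = -1/3 := by linarith
      subst hc2 hc3
      norm_num at hnull
      have hd1' : (d1:ℝ) = 27 := by
        have h27 : ((d1:ℝ))⁻¹ = (27:ℝ)⁻¹ := by norm_num; linarith
        have := inv_injective h27
        exact this
      have : d1 = 27 := by exact_mod_cast hd1'
      exact ⟨this, rfl, rfl, rfl, rfl⟩
    · exfalso
      have hc2 : c2 = -2 := by linarith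
      have hc3 : c3 = 0 := by linarith
      subst hc2 hc3; norm_num at hnull; linarith
    · exfalso
      have hc2 : c2 = -7/3 := by linarith
      have hc3 : c3 = 1/3 := by linarith
      subst hc2 hc3; norm_num at hnull; linarith
    · exfalso
      have hc2 : c2 = -8/3 := by linarith
      have hc3 : c3 = 2/3 := by linarith
      subst hc2 hc3; norm_num at hnull; linarith
  · norm_num
end
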